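/- (Theorem 2(I), contrapositive form.) Let H be a Hermitian tensor that has a positive Hermitian decomposition. Then for every integer k ≥ m+1 the semidefinite relaxation (16) is feasible: there exists a truncated moment sequence z : {α ∈ ℕ^{2n} : |α| ≤ 2k} → ℝ such that M_k(z) ⪰ 0, L_{h_i}^{(k)}(z) = 0 for every i ∈ [m] where h_i(x) = ‖x^{(i)}‖² − 1, and Re(H I J) = L_z(R_{IJ}), Im(H I J) = L_z(T_{IJ}) for all multi-indices I, J. (Hence, if the relaxation is infeasible for some k, then H has no positive Hermitian decomposition, i.e., the corresponding mixed state is not separable.) -/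

import Mathlib

/-!
If `H = Σ_i λ_i ⊗_k u_i^{(k)} (u_i^{(k)})^*`, take `z` to be the moment sequence of the atomic
measure `Σ_i λ_i δ_{x_i}`, where `x_i ∈ ℝ^{2n}` collects the real and imaginary parts of the
`u_i^{(k)}`. Its moment matrices are nonnegative combinations of rank-one Gram matrices, the
points `x_i` lie on the product of spheres so every localizing matrix of `h_i` vanishes, and
`L_z(R_{IJ}) + i L_z(T_{IJ}) = Σ_i λ_i P_{IJ}(x_i) = H I J`.
-/

/-- The coordinate index set of `ℝ^{2n}`, `n = n₁ + ⋯ + n_m`. -/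
abbrev CoordIdx (m : ℕ) (n : Fin m → ℕ) : Type := Σ k : Fin m, Fin (n k) × Fin 2

/-- The complex vector `u^{(k)}(x) = x_Re^{(k)} + i·x_Im^{(k)} ∈ ℂ^{n_k}`. -/
noncomputable def uC (m : ℕ) (n : Fin m → ℕ) (x : CoordIdx m n → ℝ)
    (k : Fin m) (j : Fin (n k)) : ℂ :=
  (x ⟨k, (j, 0)⟩ : ℝ) + Complex.I * (x ⟨k, (j, 1)⟩ : ℝ)

/-- `P_{IJ}(x) = Π_k u^{(k)}(x)(I k) · conj(u^{(k)}(x)(J k))`. -/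
noncomputable def Pfun (m : ℕ) (n : Fin m → ℕ)
    (I J : ∀ k : Fin m, Fin (n k)) (x : CoordIdx m n → ℝ) : ℂ :=
  ∏ k, uC m n x k (I k) * (starRingEnd ℂ) (uC m n x k (J k))

/-- The sphere polynomial `h_i(x) = ‖x^{(i)}‖² − 1`. -/
noncomputable def spherePoly (m : ℕ) (n : Fin m → ℕ) (i : Fin m) :
    MvPolynomial (CoordIdx m n) ℝ :=
  (∑ j : Fin (n i) × Fin 2, MvPolynomial.X (⟨i, j⟩ : CoordIdx m n) ^ 2) - 1

/-- The Riesz functional `L_z(p) = Σ_α p_α z_α`. -/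
noncomputable def riesz {V : Type*} (z : (V → ℕ) → ℝ) (p : MvPolynomial V ℝ) : ℝ :=
  ∑ γ ∈ p.support, MvPolynomial.coeff γ p * z ⇑γ

open MvPolynomial

section AtomicMoments

variable {V ι : Type*} [Fintype V] [Fintype ι]

noncomputable def atomicMoments (lam : ι → ℝ) (x : ι → V → ℝ) (α : V → ℕ) : ℝ :=
  ∑ i, lam i * ∏ v, x i v ^ α v

lemma atomicMoments_add (lam : ι → ℝ) (x : ι → V → ℝ) (α β : V → ℕ) :
    atomicMoments lam x (α + β) = atomicMoments (fun i => lam i * ∏ v, x i v ^ α v) x β := by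
  simp only [atomicMoments, Pi.add_apply, pow_add, Finset.prod_mul_distrib, mul_assoc]

lemma riesz_atomicMoments (lam : ι → ℝ) (x : ι → V → ℝ) (p : MvPolynomial V ℝ) :
    riesz (atomicMoments lam x) p = ∑ i, lam i * eval (x i) p := by
  simp only [riesz, atomicMoments, eval_eq', Finset.mul_sum, Finset.sum_comm (γ := ι)]
  exact Finset.sum_congr rfl fun _ _ => Finset.sum_congr rfl fun _ _ => by ring

lemma posSemidef_atomicMoments {κ : Type*} [Fintype κ] {lam : ι → ℝ} (hlam : ∀ i, 0 ≤ lam i)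
    (x : ι → V → ℝ) (f : κ → V → ℕ) :
    (Matrix.of fun a b => atomicMoments lam x (f a + f b)).PosSemidef := by
  have hsum : (Matrix.of fun a b => atomicMoments lam x (f a + f b)) =
      ∑ i, lam i • Matrix.vecMulVec (fun a => ∏ v, x i v ^ f a v)
        (star fun a => ∏ v, x i v ^ f a v) := by
    ext a b
    simp [atomicMoments, Matrix.sum_apply, Matrix.vecMulVec_apply, pow_add,
      Finset.prod_mul_distrib]
  rw [hsum]
  exact Matrix.posSemidef_sum _ fun i _ =>
    (Matrix.posSemidef_vecMulVec_self_star _).smul (hlam i)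

end AtomicMoments

noncomputable def realCoords (m : ℕ) (n : Fin m → ℕ) (u : ∀ k : Fin m, Fin (n k) → ℂ) :
    CoordIdx m n → ℝ :=
  fun v => ![(u v.1 v.2.1).re, (u v.1 v.2.1).im] v.2.2

lemma uC_realCoords (m : ℕ) (n : Fin m → ℕ) (u : ∀ k : Fin m, Fin (n k) → ℂ) :
    uC m n (realCoords m n u) = u := by
  ext k j
  apply Complex.ext <;> simp [uC, realCoords]

lemma Pfun_realCoords (m : ℕ) (n : Fin m → ℕ) (u : ∀ k : Fin m, Fin (n k) → ℂ)
    (I J : ∀ k : Fin m, Fin (n k)) :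
    Pfun m n I J (realCoords m n u) = ∏ k, u k (I k) * (starRingEnd ℂ) (u k (J k)) := by
  rw [Pfun, uC_realCoords]

lemma eval_spherePoly_realCoords (m : ℕ) (n : Fin m → ℕ) (u : ∀ k : Fin m, Fin (n k) → ℂ)
    (i : Fin m) :
    eval (realCoords m n u) (spherePoly m n i) = ∑ j, Complex.normSq (u i j) - 1 := by
  simp [spherePoly, realCoords, Fintype.sum_prod_type, Complex.normSq_apply, sq]

theorem relaxation_feasible_of_posHermitianDecomp_general (m : ℕ) (n : Fin m → ℕ)
    (H : (∀ k : Fin m, Fin (n k)) → (∀ k : Fin m, Fin (n k)) → ℂ)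
    (R T : (∀ k : Fin m, Fin (n k)) → (∀ k : Fin m, Fin (n k)) →
      MvPolynomial (CoordIdx m n) ℝ)
    (hRT : ∀ I J (x : CoordIdx m n → ℝ), Pfun m n I J x =
      (MvPolynomial.eval x (R I J) : ℂ) + Complex.I * (MvPolynomial.eval x (T I J) : ℂ))
    (hdecomp : ∃ (r : ℕ) (lam : Fin r → ℝ) (u : Fin r → ∀ k : Fin m, Fin (n k) → ℂ),
      (∀ i, 0 < lam i) ∧ (∀ i k, ∑ j, Complex.normSq (u i k j) = 1) ∧
      ∀ I J, H I J = ∑ i, (lam i : ℂ) * ∏ k, u i k (I k) * (starRingEnd ℂ) (u i k (J k))) :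
    ∀ t : ℕ, m + 1 ≤ t → ∃ z : (CoordIdx m n → ℕ) → ℝ,
      Matrix.PosSemidef (Matrix.of
        fun α β : {a : CoordIdx m n → Fin (t + 1) // (∑ v, (a v : ℕ)) ≤ t} =>
          z (fun v => (α.1 v : ℕ) + (β.1 v : ℕ))) ∧
      (∀ i : Fin m, ∀ α β : CoordIdx m n → ℕ,
        (∑ v, α v) ≤ t - 1 → (∑ v, β v) ≤ t - 1 →
        (∑ γ ∈ (spherePoly m n i).support, MvPolynomial.coeff γ (spherePoly m n i) *
          z (fun v => α v + β v + γ v)) = 0) ∧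
      ∀ I J, (H I J).re = riesz z (R I J) ∧ (H I J).im = riesz z (T I J) := by
  obtain ⟨r, lam, u, hlam, hunit, hHdec⟩ := hdecomp
  intro t _
  set x := fun i => realCoords m n (u i)
  refine ⟨atomicMoments lam x, posSemidef_atomicMoments (fun i => (hlam i).le) x _,
    fun i α β _ _ => ?_, fun I J => ?_⟩
  · change riesz (fun γ => atomicMoments lam x (α + β + γ)) (spherePoly m n i) = 0
    simp only [atomicMoments_add, riesz_atomicMoments, x, eval_spherePoly_realCoords, hunit,
      sub_self, mul_zero, Finset.sum_const_zero]
  · have hH : H I J = ∑ i, (lam i : ℂ) *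
        (eval (x i) (R I J) + Complex.I * eval (x i) (T I J) : ℂ) := by
      simp only [hHdec, ← hRT, x, Pfun_realCoords]
    simp [hH, riesz_atomicMoments, Complex.re_sum, Complex.im_sum]

/-- Theorem 2(I), contrapositive form: if a Hermitian tensor `H` has a
positive Hermitian decomposition, then for every `k ≥ m + 1` the semidefinite
relaxation (16) is feasible: some truncated moment sequence `z` on `|α| ≤ 2k` has
`M_k(z) ⪰ 0`, `L_{h_i}^{(k)}(z) = 0` for all `i ∈ [m]`, and
`Re(H I J) = L_z(R_{IJ})`, `Im(H I J) = L_z(T_{IJ})` for all `I, J`. -/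
theorem relaxation_feasible_of_posHermitianDecomp (m : ℕ) (n : Fin m → ℕ)
    (H : (∀ k : Fin m, Fin (n k)) → (∀ k : Fin m, Fin (n k)) → ℂ)
    (hH : ∀ I J, H I J = (starRingEnd ℂ) (H J I))
    (R T : (∀ k : Fin m, Fin (n k)) → (∀ k : Fin m, Fin (n k)) →
      MvPolynomial (CoordIdx m n) ℝ)
    (hdegR : ∀ I J, (R I J).totalDegree ≤ 2 * m)
    (hdegT : ∀ I J, (T I J).totalDegree ≤ 2 * m)
    (hRT : ∀ I J (x : CoordIdx m n → ℝ), Pfun m n I J x =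
      (MvPolynomial.eval x (R I J) : ℂ) + Complex.I * (MvPolynomial.eval x (T I J) : ℂ))
    (hdecomp : ∃ (r : ℕ) (lam : Fin r → ℝ) (u : Fin r → ∀ k : Fin m, Fin (n k) → ℂ),
      (∀ i, 0 < lam i) ∧ (∀ i k, ∑ j, Complex.normSq (u i k j) = 1) ∧
      ∀ I J, H I J = ∑ i, (lam i : ℂ) * ∏ k, u i k (I k) * (starRingEnd ℂ) (u i k (J k))) :
    ∀ t : ℕ, m + 1 ≤ t → ∃ z : (CoordIdx m n → ℕ) → ℝ,
      Matrix.PosSemidef (Matrix.of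
        fun α β : {a : CoordIdx m n → Fin (t + 1) // (∑ v, (a v : ℕ)) ≤ t} =>
          z (fun v => (α.1 v : ℕ) + (β.1 v : ℕ))) ∧
      (∀ i : Fin m, ∀ α β : CoordIdx m n → ℕ,
        (∑ v, α v) ≤ t - 1 → (∑ v, β v) ≤ t - 1 →
        (∑ γ ∈ (spherePoly m n i).support, MvPolynomial.coeff γ (spherePoly m n i) *
          z (fun v => α v + β v + γ v)) = 0) ∧
      ∀ I J, (H I J).re = riesz z (R I J) ∧ (H I J).im = riesz z (T I J) :=
  relaxation_feasible_of_posHermitianDecomp_general m n H R T hRT hdecomp
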